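/- arXiv:2005.08513 — 5 statements merged into one kernel-verified Lean document; each statement's English description precedes it below -/
import Mathlib

section
/- Let f : ℝ^d × Ξ → ℝ be measurable with respect to the product sigma-algebra B(ℝ^d) ⊗ T, and suppose f(·, s) is continuous for every s ∈ Ξ. Then the set Δ_f = {(x,s) : f(·,s) is differentiable at x} belongs to B(ℝ^d) ⊗ T. -/
open MeasureTheory Filter Set Metric FDerivMeasurableAux TopologicalSpace

section Aux

variable {E : Type*} [NormedAddCommGroup E] [NormedSpace ℝ E]

lemma memA_iff {g : E → ℝ} {L : E →L[ℝ] ℝ} {r ε : ℝ} {x : E} :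
    x ∈ FDerivMeasurableAux.A g L r ε ↔
      ∃ r' ∈ Ioc (r / 2) r, ∀ y ∈ ball x r', ∀ z ∈ ball x r',
        ‖g z - g y - L (z - y)‖ < ε * r := Iff.rfl

lemma A_perturb {g : E → ℝ} {L L' : E →L[ℝ] ℝ} {r ε δ : ℝ} (hr : 0 < r)
    (h : ‖L - L'‖ ≤ δ) :
    FDerivMeasurableAux.A g L r ε ⊆ FDerivMeasurableAux.A g L' r (ε + 2 * δ) := by
  rintro x ⟨r', hr', H⟩
  refine ⟨r', hr', fun y hy z hz => ?_⟩
  have hδ : 0 ≤ δ := le_trans (norm_nonneg _) h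
  have h1 : g z - g y - L' (z - y) = g z - g y - L (z - y) + (L - L') (z - y) := by
    simp only [ContinuousLinearMap.sub_apply]; ring
  have hzy : ‖z - y‖ ≤ 2 * r := by
    have h2 : dist y x < r' := mem_ball.1 hy
    have h3 : dist z x < r' := mem_ball.1 hz
    have h4 : dist z y ≤ dist z x + dist x y := dist_triangle _ _ _
    rw [dist_comm x y] at h4
    have : dist z y ≤ 2 * r := by
      have := hr'.2
      linarith
    rwa [dist_eq_norm] at this
  have h5 : ‖(L - L') (z - y)‖ ≤ δ * (2 * r) := by
    calc ‖(L - L') (z - y)‖ ≤ ‖L - L'‖ * ‖z - y‖ := (L - L').le_opNorm _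
      _ ≤ δ * (2 * r) := by
          apply mul_le_mul h hzy (norm_nonneg _) hδ
  calc ‖g z - g y - L' (z - y)‖
      ≤ ‖g z - g y - L (z - y)‖ + ‖(L - L') (z - y)‖ := by rw [h1]; exact norm_add_le _ _
    _ < ε * r + δ * (2 * r) := add_lt_add_of_lt_of_le (H y hy z hz) h5
    _ = (ε + 2 * δ) * r := by ring

lemma A_eq_countable [ProperSpace E] {S : Set E} (hS : Dense S)
    {g : E → ℝ} (hg : Continuous g) (L : E →L[ℝ] ℝ) {r ε : ℝ} (hr : 0 < r) (hε : 0 < ε) :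
    FDerivMeasurableAux.A g L r ε =
      ⋃ (q : ℚ) (_ : r / 2 < (q : ℝ) ∧ (q : ℝ) < r)
        (c : ℚ) (_ : 0 < (c : ℝ) ∧ (c : ℝ) < ε * r),
        ⋂ (y ∈ S) (z ∈ S),
          {x : E | dist y x < (q : ℝ) → dist z x < (q : ℝ) →
            ‖g z - g y - L (z - y)‖ ≤ (c : ℝ)} := by
  have hφ : Continuous fun p : E × E => ‖g p.2 - g p.1 - L (p.2 - p.1)‖ := by
    apply Continuous.norm
    exact ((hg.comp continuous_snd).sub (hg.comp continuous_fst)).sub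
      (L.continuous.comp (continuous_snd.sub continuous_fst))
  ext x
  simp only [mem_iUnion, mem_iInter, mem_setOf_eq]
  constructor
  · rintro ⟨r', ⟨hr'1, hr'2⟩, H⟩
    obtain ⟨q, hq1, hq2⟩ := exists_rat_btwn hr'1
    have hq2' : (q : ℝ) < r := lt_of_lt_of_le hq2 hr'2
    have hq0 : (0 : ℝ) < q := lt_trans (by linarith) hq1
    have hKc : IsCompact (closedBall x (q : ℝ) ×ˢ closedBall x (q : ℝ)) :=
      (isCompact_closedBall _ _).prod (isCompact_closedBall _ _)
    have hKne : (closedBall x (q : ℝ) ×ˢ closedBall x (q : ℝ)).Nonempty :=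
      ⟨(x, x), by constructor <;> simpa using le_of_lt hq0⟩
    obtain ⟨a, haK, ha⟩ := hKc.exists_isMaxOn hKne hφ.continuousOn
    have hsub : closedBall x (q : ℝ) ⊆ ball x r' := closedBall_subset_ball hq2
    have hMlt : ‖g a.2 - g a.1 - L (a.2 - a.1)‖ < ε * r :=
      H a.1 (hsub haK.1) a.2 (hsub haK.2)
    obtain ⟨c, hc1, hc2⟩ := exists_rat_btwn hMlt
    have hc0 : (0 : ℝ) < c := lt_of_le_of_lt (norm_nonneg _) hc1
    refine ⟨q, ⟨hq1, hq2'⟩, c, ⟨hc0, hc2⟩, ?_⟩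
    intro y hy z hz h1 h2
    have hmem : (y, z) ∈ closedBall x (q : ℝ) ×ˢ closedBall x (q : ℝ) :=
      ⟨mem_closedBall.2 (le_of_lt h1), mem_closedBall.2 (le_of_lt h2)⟩
    exact le_trans (ha hmem) (le_of_lt hc1)
  · rintro ⟨q, ⟨hq1, hq2⟩, c, ⟨hc0, hc2⟩, H⟩
    refine ⟨(q : ℝ), ⟨hq1, le_of_lt hq2⟩, fun y hy z hz => ?_⟩
    have key : ∀ y ∈ ball x (q : ℝ), ∀ z ∈ ball x (q : ℝ),
        ‖g z - g y - L (z - y)‖ ≤ (c : ℝ) := by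
      have hC : IsClosed {p : E × E | ‖g p.2 - g p.1 - L (p.2 - p.1)‖ ≤ (c : ℝ)} :=
        isClosed_le hφ continuous_const
      have hsub : ball x (q : ℝ) ×ˢ ball x (q : ℝ) ⊆
          closure ((ball x (q : ℝ) ∩ S) ×ˢ (ball x (q : ℝ) ∩ S)) := by
        rw [closure_prod_eq]
        exact Set.prod_mono (hS.open_subset_closure_inter isOpen_ball)
          (hS.open_subset_closure_inter isOpen_ball)
      have hsub2 : (ball x (q : ℝ) ∩ S) ×ˢ (ball x (q : ℝ) ∩ S) ⊆
          {p : E × E | ‖g p.2 - g p.1 - L (p.2 - p.1)‖ ≤ (c : ℝ)} := by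
        rintro ⟨y', z'⟩ ⟨⟨hy1, hy2⟩, hz1, hz2⟩
        exact H y' hy2 z' hz2 (mem_ball.1 hy1) (mem_ball.1 hz1)
      intro y hy z hz
      have h3 : (y, z) ∈ closure ((ball x (q : ℝ) ∩ S) ×ˢ (ball x (q : ℝ) ∩ S)) :=
        hsub ⟨hy, hz⟩
      exact closure_minimal hsub2 hC h3
    exact lt_of_le_of_lt (key y hy z hz) hc2

end Aux

/-- For `f : ℝ^d × Ξ → ℝ` jointly measurable with `f (·, s)` continuous
for every `s`, the set `Δ_f = {(x,s) : f(·,s) is differentiable at x}` is measurable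
for the product σ-algebra. -/
theorem stmt0 {d : ℕ} {Ξ : Type*} [MeasurableSpace Ξ]
    (μ : Measure Ξ) [IsProbabilityMeasure μ]
    (f : EuclideanSpace ℝ (Fin d) × Ξ → ℝ)
    (hf : Measurable f)
    (hcont : ∀ s : Ξ, Continuous (fun x => f (x, s))) :
    MeasurableSet {p : EuclideanSpace ℝ (Fin d) × Ξ |
      DifferentiableAt ℝ (fun x => f (x, p.2)) p.1} := by
  obtain ⟨S, hSc, hSd⟩ := TopologicalSpace.exists_countable_dense (EuclideanSpace ℝ (Fin d))
  obtain ⟨T, hTc, hTd⟩ :=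
    TopologicalSpace.exists_countable_dense (EuclideanSpace ℝ (Fin d) →L[ℝ] ℝ)
  -- Measurability of the parametrized `A` sets.
  have hAmeas : ∀ (L : EuclideanSpace ℝ (Fin d) →L[ℝ] ℝ) (r ε : ℝ), 0 < r → 0 < ε →
      MeasurableSet {p : EuclideanSpace ℝ (Fin d) × Ξ |
        p.1 ∈ FDerivMeasurableAux.A (fun x => f (x, p.2)) L r ε} := by
    intro L r ε hr hε
    have heq : {p : EuclideanSpace ℝ (Fin d) × Ξ |
        p.1 ∈ FDerivMeasurableAux.A (fun x => f (x, p.2)) L r ε} =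
        ⋃ (q : ℚ) (_ : r / 2 < (q : ℝ) ∧ (q : ℝ) < r)
          (c : ℚ) (_ : 0 < (c : ℝ) ∧ (c : ℝ) < ε * r),
          ⋂ (y ∈ S) (z ∈ S),
            {p : EuclideanSpace ℝ (Fin d) × Ξ | dist y p.1 < (q : ℝ) → dist z p.1 < (q : ℝ) →
              ‖f (z, p.2) - f (y, p.2) - L (z - y)‖ ≤ (c : ℝ)} := by
      ext p
      rw [mem_setOf_eq, A_eq_countable hSd (hcont p.2) L hr hε]
      simp only [mem_iUnion, mem_iInter, mem_setOf_eq]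
    rw [heq]
    refine MeasurableSet.iUnion fun q => MeasurableSet.iUnion fun _ =>
      MeasurableSet.iUnion fun c => MeasurableSet.iUnion fun _ =>
      MeasurableSet.biInter hSc fun y _ => MeasurableSet.biInter hSc fun z _ => ?_
    have h1 : MeasurableSet {p : EuclideanSpace ℝ (Fin d) × Ξ | dist y p.1 < (q : ℝ)} :=
      measurableSet_lt ((continuous_const.dist continuous_id).measurable.comp measurable_fst) measurable_const
    have h2 : MeasurableSet {p : EuclideanSpace ℝ (Fin d) × Ξ | dist z p.1 < (q : ℝ)} :=
      measurableSet_lt ((continuous_const.dist continuous_id).measurable.comp measurable_fst) measurable_const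
    have h3 : MeasurableSet {p : EuclideanSpace ℝ (Fin d) × Ξ |
        ‖f (z, p.2) - f (y, p.2) - L (z - y)‖ ≤ (c : ℝ)} := by
      apply measurableSet_le _ measurable_const
      apply Measurable.norm
      exact ((hf.comp (measurable_const.prodMk measurable_snd)).sub
        (hf.comp (measurable_const.prodMk measurable_snd))).sub measurable_const
    have : {p : EuclideanSpace ℝ (Fin d) × Ξ | dist y p.1 < (q : ℝ) → dist z p.1 < (q : ℝ) →
        ‖f (z, p.2) - f (y, p.2) - L (z - y)‖ ≤ (c : ℝ)} =
        ({p : EuclideanSpace ℝ (Fin d) × Ξ | dist y p.1 < (q : ℝ)} ∩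
          {p : EuclideanSpace ℝ (Fin d) × Ξ | dist z p.1 < (q : ℝ)})ᶜ ∪
        {p : EuclideanSpace ℝ (Fin d) × Ξ |
          ‖f (z, p.2) - f (y, p.2) - L (z - y)‖ ≤ (c : ℝ)} := by
      ext p
      simp only [mem_setOf_eq, mem_union, mem_compl_iff, mem_inter_iff]
      tauto
    rw [this]
    exact ((h1.inter h2).compl).union h3
  -- Characterization of the differentiability set via a countable dense set of linear maps.
  have hD : ∀ s : Ξ, {x | DifferentiableAt ℝ (fun x => f (x, s)) x} =
      ⋂ e : ℕ, ⋃ n : ℕ, ⋂ (i ≥ n), ⋂ (j ≥ n), ⋃ L ∈ T,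
        FDerivMeasurableAux.A (fun x => f (x, s)) L ((1 / 2) ^ i) ((1 / 2) ^ e) ∩
          FDerivMeasurableAux.A (fun x => f (x, s)) L ((1 / 2) ^ j) ((1 / 2) ^ e) := by
    intro s
    have h0 : {x | DifferentiableAt ℝ (fun x => f (x, s)) x} =
        FDerivMeasurableAux.D (fun x => f (x, s))
          (univ : Set (EuclideanSpace ℝ (Fin d) →L[ℝ] ℝ)) := by
      rw [← differentiable_set_eq_D (𝕜 := ℝ) (f := fun x => f (x, s))
        (univ : Set (EuclideanSpace ℝ (Fin d) →L[ℝ] ℝ)) complete_univ]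
      ext x; simp
    rw [h0]
    apply Subset.antisymm
    · intro x hx
      simp only [FDerivMeasurableAux.D, mem_iInter, mem_iUnion] at hx ⊢
      intro e
      obtain ⟨n, hn⟩ := hx (e + 1)
      refine ⟨n, fun i hi j hj => ?_⟩
      have hB := hn i hi j hj
      obtain ⟨L, hL1, hL2⟩ : ∃ L, x ∈
          FDerivMeasurableAux.A (fun x => f (x, s)) L ((1 / 2) ^ i) ((1 / 2) ^ (e + 1)) ∩
          FDerivMeasurableAux.A (fun x => f (x, s)) L ((1 / 2) ^ j) ((1 / 2) ^ (e + 1)) := by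
        simpa [FDerivMeasurableAux.B, mem_iUnion] using hB
      obtain ⟨L', hL'T, hLL'⟩ : ∃ L' ∈ T, dist L L' < (1 / 2 : ℝ) ^ (e + 2) := by
        have hmem := hTd L
        rw [Metric.mem_closure_iff] at hmem
        exact hmem _ (by positivity)
      have hnorm : ‖L - L'‖ ≤ (1 / 2 : ℝ) ^ (e + 2) := by
        rw [← dist_eq_norm]; exact le_of_lt hLL'
      have harith : (1 / 2 : ℝ) ^ (e + 1) + 2 * (1 / 2) ^ (e + 2) = (1 / 2) ^ e := by ring
      refine ⟨L', hL'T, ?_, ?_⟩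
      · have := A_perturb (pow_pos (by norm_num : (0:ℝ) < 1 / 2) i) hnorm hL1
        exact FDerivMeasurableAux.A_mono _ _ (le_of_eq harith) this
      · have := A_perturb (pow_pos (by norm_num : (0:ℝ) < 1 / 2) j) hnorm hL2
        exact FDerivMeasurableAux.A_mono _ _ (le_of_eq harith) this
    · intro x hx
      simp only [FDerivMeasurableAux.D, mem_iInter, mem_iUnion] at hx ⊢
      intro e
      obtain ⟨n, hn⟩ := hx e
      refine ⟨n, fun i hi j hj => ?_⟩
      obtain ⟨L, _, h1, h2⟩ := hn i hi j hj
      simp only [FDerivMeasurableAux.B, mem_iUnion]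
      exact ⟨L, mem_univ L, h1, h2⟩
  -- Rewrite the full set as countable operations on measurable sets.
  have hset : {p : EuclideanSpace ℝ (Fin d) × Ξ |
      DifferentiableAt ℝ (fun x => f (x, p.2)) p.1} =
      ⋂ e : ℕ, ⋃ n : ℕ, ⋂ (i ≥ n), ⋂ (j ≥ n), ⋃ L ∈ T,
        ({p : EuclideanSpace ℝ (Fin d) × Ξ |
            p.1 ∈ FDerivMeasurableAux.A (fun x => f (x, p.2)) L ((1 / 2) ^ i) ((1 / 2) ^ e)} ∩
         {p : EuclideanSpace ℝ (Fin d) × Ξ |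
            p.1 ∈ FDerivMeasurableAux.A (fun x => f (x, p.2)) L ((1 / 2) ^ j) ((1 / 2) ^ e)}) := by
    ext p
    have h1 : p.1 ∈ {x | DifferentiableAt ℝ (fun x => f (x, p.2)) x} ↔
        DifferentiableAt ℝ (fun x => f (x, p.2)) p.1 := Iff.rfl
    rw [mem_setOf_eq, ← h1, hD p.2]
    simp only [mem_iInter, mem_iUnion, mem_inter_iff, mem_setOf_eq]
  rw [hset]
  refine MeasurableSet.iInter fun e => MeasurableSet.iUnion fun n =>
    MeasurableSet.biInter (to_countable _) fun i _ =>
    MeasurableSet.biInter (to_countable _) fun j _ =>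
    MeasurableSet.biUnion hTc fun L _ => ?_
  exact (hAmeas L _ _ (pow_pos (by norm_num) i) (pow_pos (by norm_num) e)).inter
    (hAmeas L _ _ (pow_pos (by norm_num) j) (pow_pos (by norm_num) e))
end

section
/- Let f : ℝ^d × Ξ → ℝ be B(ℝ^d) ⊗ T-measurable with f(·,s) continuous for every s. Define φ₀(x,s) = ∇f(x,s) if f(·,s) is differentiable at x, and φ₀(x,s) = 0 otherwise. Then φ₀ is B(ℝ^d) ⊗ T-measurable as a map into ℝ^d. -/
open MeasureTheory Filter Set Metric FDerivMeasurableAux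
open scoped Classical Topology

section Aux

variable {d : ℕ} {Ξ : Type*} [MeasurableSpace Ξ]
  {f : EuclideanSpace ℝ (Fin d) × Ξ → ℝ}

/-- Joint measurability of the approximation sets `A` when `f` is jointly measurable and
continuous in the first variable. -/
lemma measA (hf : Measurable f)
    (hcont : ∀ s : Ξ, Continuous (fun x => f (x, s)))
    (L : EuclideanSpace ℝ (Fin d) →L[ℝ] ℝ) (r ε : ℝ) :
    MeasurableSet {p : EuclideanSpace ℝ (Fin d) × Ξ |
      p.1 ∈ A (fun x => f (x, p.2)) L r ε} := by
  obtain ⟨Dq, Dq_count, Dq_dense⟩ :=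
    TopologicalSpace.exists_countable_dense (EuclideanSpace ℝ (Fin d))
  have key : ∀ p : EuclideanSpace ℝ (Fin d) × Ξ,
      p.1 ∈ A (fun x => f (x, p.2)) L r ε ↔
      ∃ q : ℚ, (r / 2 < q ∧ (q : ℝ) ≤ r) ∧ ∃ n : ℕ, ∀ y ∈ Dq, ∀ z ∈ Dq,
        dist y p.1 ≤ q → dist z p.1 ≤ q →
        ‖f (z, p.2) - f (y, p.2) - L (z - y)‖ ≤ ε * r - 1 / (n + 1) := by
    intro p
    set G : (EuclideanSpace ℝ (Fin d)) × (EuclideanSpace ℝ (Fin d)) → ℝ :=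
      fun yz => ‖f (yz.2, p.2) - f (yz.1, p.2) - L (yz.2 - yz.1)‖ with hG
    have Gcont : Continuous G := by
      apply Continuous.norm
      exact (((hcont p.2).comp continuous_snd).sub
          ((hcont p.2).comp continuous_fst)).sub
        (L.continuous.comp (continuous_snd.sub continuous_fst))
    constructor
    · rintro ⟨r', ⟨hr1, hr2⟩, H⟩
      obtain ⟨q, hq1, hq2⟩ := exists_rat_btwn hr1
      refine ⟨q, ⟨hq1, hq2.le.trans hr2⟩, ?_⟩
      rcases lt_or_ge (q : ℝ) 0 with hq0 | hq0
      · exact ⟨0, fun y _ z _ hy _ => absurd (dist_nonneg.trans hy) (not_le.2 hq0)⟩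
      · set C := closedBall p.1 (q : ℝ) ×ˢ closedBall p.1 (q : ℝ) with hC
        have hCne : C.Nonempty := ⟨(p.1, p.1), by simp [hC, hq0]⟩
        have hCc : IsCompact C := (isCompact_closedBall _ _).prod (isCompact_closedBall _ _)
        obtain ⟨w, hw, hmax⟩ := hCc.exists_isMaxOn hCne Gcont.continuousOn
        rw [hC, Set.mem_prod, mem_closedBall, mem_closedBall] at hw
        have hm : G w < ε * r :=
          H w.1 (mem_ball.2 (hw.1.trans_lt hq2)) w.2 (mem_ball.2 (hw.2.trans_lt hq2))
        obtain ⟨n, hn⟩ := exists_nat_one_div_lt (show (0:ℝ) < ε * r - G w by linarith)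
        refine ⟨n, fun y _ z _ hy hz => ?_⟩
        have hmem : (y, z) ∈ C := Set.mem_prod.2 ⟨mem_closedBall.2 hy, mem_closedBall.2 hz⟩
        have := hmax hmem
        have h1 : G (y, z) ≤ G w := this
        have : (1 : ℝ) / (n + 1) < ε * r - G w := hn
        calc ‖f (z, p.2) - f (y, p.2) - L (z - y)‖ = G (y, z) := rfl
          _ ≤ G w := h1
          _ ≤ ε * r - 1 / (n + 1) := by linarith
    · rintro ⟨q, ⟨hq1, hq2⟩, n, H⟩
      refine ⟨q, ⟨hq1, hq2⟩, fun y hy z hz => ?_⟩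
      have hc : G (y, z) ≤ ε * r - 1 / (n + 1) := by
        have hsub : ((ball p.1 (q:ℝ) ∩ Dq) ×ˢ (ball p.1 (q:ℝ) ∩ Dq)) ⊆
            {yz | G yz ≤ ε * r - 1 / (n + 1)} := by
          rintro ⟨a, b⟩ ⟨⟨hab, haD⟩, hbb, hbD⟩
          exact H a haD b hbD (mem_ball.1 hab).le (mem_ball.1 hbb).le
        have hclosed : IsClosed {yz :
            (EuclideanSpace ℝ (Fin d)) × (EuclideanSpace ℝ (Fin d)) |
            G yz ≤ ε * r - 1 / (n + 1)} := isClosed_le Gcont continuous_const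
        have hyc : (y, z) ∈
            closure ((ball p.1 (q:ℝ) ∩ Dq) ×ˢ (ball p.1 (q:ℝ) ∩ Dq)) := by
          rw [closure_prod_eq]
          exact ⟨Dq_dense.open_subset_closure_inter isOpen_ball hy,
            Dq_dense.open_subset_closure_inter isOpen_ball hz⟩
        exact hclosed.closure_subset ((closure_mono hsub) hyc)
      have hpos : (0:ℝ) < 1 / (n + 1) := by positivity
      calc ‖f (z, p.2) - f (y, p.2) - L (z - y)‖ = G (y, z) := rfl
        _ ≤ ε * r - 1 / (n + 1) := hc
        _ < ε * r := by linarith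
  have hset : {p : EuclideanSpace ℝ (Fin d) × Ξ | p.1 ∈ A (fun x => f (x, p.2)) L r ε} =
      ⋃ q : ℚ, ⋃ _ : (r / 2 < q ∧ (q : ℝ) ≤ r), ⋃ n : ℕ, ⋂ y ∈ Dq, ⋂ z ∈ Dq,
        {p : EuclideanSpace ℝ (Fin d) × Ξ | dist y p.1 ≤ q → dist z p.1 ≤ q →
          ‖f (z, p.2) - f (y, p.2) - L (z - y)‖ ≤ ε * r - 1 / (n + 1)} := by
    ext p
    simp only [mem_iUnion, mem_iInter, mem_setOf_eq, exists_prop]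
    exact key p
  rw [hset]
  apply MeasurableSet.iUnion; intro q
  apply MeasurableSet.iUnion; intro _
  apply MeasurableSet.iUnion; intro n
  apply MeasurableSet.biInter Dq_count; intro y _
  apply MeasurableSet.biInter Dq_count; intro z _
  have h1 : MeasurableSet {p : EuclideanSpace ℝ (Fin d) × Ξ | dist y p.1 ≤ (q:ℝ)} :=
    measurableSet_le (measurable_const.dist measurable_fst) measurable_const
  have h2 : MeasurableSet {p : EuclideanSpace ℝ (Fin d) × Ξ | dist z p.1 ≤ (q:ℝ)} :=
    measurableSet_le (measurable_const.dist measurable_fst) measurable_const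
  have h3 : MeasurableSet {p : EuclideanSpace ℝ (Fin d) × Ξ |
      ‖f (z, p.2) - f (y, p.2) - L (z - y)‖ ≤ ε * r - 1 / (n + 1)} := by
    apply measurableSet_le _ measurable_const
    apply Measurable.norm
    exact ((hf.comp (measurable_const.prodMk measurable_snd)).sub
      (hf.comp (measurable_const.prodMk measurable_snd))).sub measurable_const
  have : {p : EuclideanSpace ℝ (Fin d) × Ξ | dist y p.1 ≤ (q:ℝ) → dist z p.1 ≤ (q:ℝ) →
      ‖f (z, p.2) - f (y, p.2) - L (z - y)‖ ≤ ε * r - 1 / (n + 1)} =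
      ({p : EuclideanSpace ℝ (Fin d) × Ξ | dist y p.1 ≤ (q:ℝ)}ᶜ ∪
        ({p : EuclideanSpace ℝ (Fin d) × Ξ | dist z p.1 ≤ (q:ℝ)}ᶜ ∪
          {p : EuclideanSpace ℝ (Fin d) × Ξ |
            ‖f (z, p.2) - f (y, p.2) - L (z - y)‖ ≤ ε * r - 1 / (n + 1)})) := by
    ext p
    simp only [Set.mem_union, Set.mem_compl_iff, mem_setOf_eq]
    tauto
  rw [this]
  exact h1.compl.union (h2.compl.union h3)

/-- Stability of membership in `A` under small perturbations of the linear map. -/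
lemma A_perturb_s1 {g : EuclideanSpace ℝ (Fin d) → ℝ} (hg : Continuous g)
    {L : EuclideanSpace ℝ (Fin d) →L[ℝ] ℝ} {r ε : ℝ} (hr : 0 < r)
    {x : EuclideanSpace ℝ (Fin d)} (hx : x ∈ A g L r ε) :
    ∃ δ > 0, ∀ L' : EuclideanSpace ℝ (Fin d) →L[ℝ] ℝ, ‖L' - L‖ < δ → x ∈ A g L' r ε := by
  rcases hx with ⟨r', ⟨hr1, hr2⟩, H⟩
  obtain ⟨r'', h1, h2⟩ := exists_between hr1
  have hr''0 : 0 < r'' := lt_trans (half_pos hr) h1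
  set G : (EuclideanSpace ℝ (Fin d)) × (EuclideanSpace ℝ (Fin d)) → ℝ :=
    fun yz => ‖g yz.2 - g yz.1 - L (yz.2 - yz.1)‖ with hG
  have Gcont : Continuous G := by
    apply Continuous.norm
    exact ((hg.comp continuous_snd).sub (hg.comp continuous_fst)).sub
      (L.continuous.comp (continuous_snd.sub continuous_fst))
  set C := closedBall x r'' ×ˢ closedBall x r'' with hC
  have hCne : C.Nonempty := ⟨(x, x), by simp [hC, hr''0.le]⟩
  have hCc : IsCompact C := (isCompact_closedBall _ _).prod (isCompact_closedBall _ _)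
  obtain ⟨w, hw, hmax⟩ := hCc.exists_isMaxOn hCne Gcont.continuousOn
  rw [hC, Set.mem_prod, mem_closedBall, mem_closedBall] at hw
  have hm : G w < ε * r :=
    H w.1 (mem_ball.2 (hw.1.trans_lt h2)) w.2 (mem_ball.2 (hw.2.trans_lt h2))
  refine ⟨(ε * r - G w) / (2 * r), div_pos (by linarith) (by linarith), fun L' hL' => ?_⟩
  refine ⟨r'', ⟨h1, h2.le.trans hr2⟩, fun y hy z hz => ?_⟩
  have hyz : ‖z - y‖ ≤ 2 * r := by
    have hy' : dist y x < r'' := mem_ball.1 hy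
    have hz' : dist z x < r'' := mem_ball.1 hz
    have : dist z y ≤ dist z x + dist x y := dist_triangle z x y
    rw [dist_comm x y] at this
    have hrr : r'' ≤ r := h2.le.trans hr2
    calc ‖z - y‖ = dist z y := (dist_eq_norm z y).symm
      _ ≤ dist z x + dist y x := this
      _ ≤ r'' + r'' := by linarith
      _ ≤ 2 * r := by linarith
  have hLL : ‖L - L'‖ * (2 * r) < ε * r - G w := by
    have h' : ‖L - L'‖ < (ε * r - G w) / (2 * r) := by rwa [norm_sub_rev]
    calc ‖L - L'‖ * (2 * r) < ((ε * r - G w) / (2 * r)) * (2 * r) := by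
          apply mul_lt_mul_of_pos_right h' (by linarith)
      _ = ε * r - G w := by field_simp
  have hmem : (y, z) ∈ C := Set.mem_prod.2
    ⟨mem_closedBall.2 (mem_ball.1 hy).le, mem_closedBall.2 (mem_ball.1 hz).le⟩
  have hGyz : G (y, z) ≤ G w := hmax hmem
  calc ‖g z - g y - L' (z - y)‖
      = ‖(g z - g y - L (z - y)) + (L - L') (z - y)‖ := by
        congr 1
        simp only [ContinuousLinearMap.sub_apply]
        ring
    _ ≤ ‖g z - g y - L (z - y)‖ + ‖(L - L') (z - y)‖ := norm_add_le _ _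
    _ ≤ G w + ‖L - L'‖ * ‖z - y‖ :=
        add_le_add hGyz ((L - L').le_opNorm _)
    _ ≤ G w + ‖L - L'‖ * (2 * r) := by
        have := norm_nonneg (L - L')
        nlinarith
    _ < ε * r := by linarith

/-- Joint measurability of the sets `B`. -/
lemma measB (hf : Measurable f)
    (hcont : ∀ s : Ξ, Continuous (fun x => f (x, s)))
    (K : Set (EuclideanSpace ℝ (Fin d) →L[ℝ] ℝ)) {r s ε : ℝ} (hr : 0 < r) (hs : 0 < s) :
    MeasurableSet {p : EuclideanSpace ℝ (Fin d) × Ξ |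
      p.1 ∈ B (fun x => f (x, p.2)) K r s ε} := by
  obtain ⟨K₀, hK₀K, hK₀count, hK₀dense⟩ :=
    (TopologicalSpace.IsSeparable.of_separableSpace K).exists_countable_dense_subset
  have hset : {p : EuclideanSpace ℝ (Fin d) × Ξ | p.1 ∈ B (fun x => f (x, p.2)) K r s ε} =
      ⋃ L ∈ K₀, ({p : EuclideanSpace ℝ (Fin d) × Ξ | p.1 ∈ A (fun x => f (x, p.2)) L r ε} ∩
        {p : EuclideanSpace ℝ (Fin d) × Ξ | p.1 ∈ A (fun x => f (x, p.2)) L s ε}) := by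
    ext p
    simp only [B, mem_setOf_eq, mem_iUnion, Set.mem_inter_iff]
    constructor
    · rintro ⟨L, hLK, hA1, hA2⟩
      obtain ⟨δ1, hδ1, H1⟩ := A_perturb_s1 (hcont p.2) hr hA1
      obtain ⟨δ2, hδ2, H2⟩ := A_perturb_s1 (hcont p.2) hs hA2
      have hLcl : L ∈ closure K₀ := hK₀dense hLK
      obtain ⟨L', hL'K₀, hL'd⟩ := Metric.mem_closure_iff.1 hLcl (min δ1 δ2)
        (lt_min hδ1 hδ2)
      rw [dist_comm, dist_eq_norm] at hL'd
      exact ⟨L', hL'K₀, H1 L' (hL'd.trans_le (min_le_left _ _)),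
        H2 L' (hL'd.trans_le (min_le_right _ _))⟩
    · rintro ⟨L, hLK₀, hA1, hA2⟩
      exact ⟨L, hK₀K hLK₀, hA1, hA2⟩
  rw [hset]
  exact MeasurableSet.biUnion hK₀count
    (fun L _ => (measA hf hcont L r ε).inter (measA hf hcont L s ε))

/-- Joint measurability of the sets `D`. -/
lemma measD (hf : Measurable f)
    (hcont : ∀ s : Ξ, Continuous (fun x => f (x, s)))
    (K : Set (EuclideanSpace ℝ (Fin d) →L[ℝ] ℝ)) :
    MeasurableSet {p : EuclideanSpace ℝ (Fin d) × Ξ |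
      p.1 ∈ D (fun x => f (x, p.2)) K} := by
  have hset : {p : EuclideanSpace ℝ (Fin d) × Ξ | p.1 ∈ D (fun x => f (x, p.2)) K} =
      ⋂ e : ℕ, ⋃ n : ℕ, ⋂ (pp : ℕ) (_ : pp ≥ n) (qq : ℕ) (_ : qq ≥ n),
        {p : EuclideanSpace ℝ (Fin d) × Ξ |
          p.1 ∈ B (fun x => f (x, p.2)) K ((1/2) ^ pp) ((1/2) ^ qq) ((1/2) ^ e)} := by
    ext p
    simp only [D, mem_iInter, mem_iUnion, mem_setOf_eq]
  rw [hset]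
  apply MeasurableSet.iInter; intro e
  apply MeasurableSet.iUnion; intro n
  apply MeasurableSet.iInter; intro pp
  apply MeasurableSet.iInter; intro _
  apply MeasurableSet.iInter; intro qq
  apply MeasurableSet.iInter; intro _
  exact measB hf hcont K (by positivity) (by positivity)

/-- The differentiability set (with derivative in a complete set) is jointly measurable. -/
lemma measDiffK (hf : Measurable f)
    (hcont : ∀ s : Ξ, Continuous (fun x => f (x, s)))
    {K : Set (EuclideanSpace ℝ (Fin d) →L[ℝ] ℝ)} (hK : IsComplete K) :
    MeasurableSet {p : EuclideanSpace ℝ (Fin d) × Ξ |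
      DifferentiableAt ℝ (fun x => f (x, p.2)) p.1 ∧
        fderiv ℝ (fun x => f (x, p.2)) p.1 ∈ K} := by
  have hset : {p : EuclideanSpace ℝ (Fin d) × Ξ |
      DifferentiableAt ℝ (fun x => f (x, p.2)) p.1 ∧
        fderiv ℝ (fun x => f (x, p.2)) p.1 ∈ K} =
      {p : EuclideanSpace ℝ (Fin d) × Ξ | p.1 ∈ D (fun x => f (x, p.2)) K} := by
    ext p
    have := differentiable_set_eq_D (f := fun x => f (x, p.2)) K hK
    rw [Set.ext_iff] at this
    exact this p.1
  rw [hset]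
  exact measD hf hcont K

/-- The parametric `fderiv` map is jointly measurable. -/
lemma measFDeriv (hf : Measurable f)
    (hcont : ∀ s : Ξ, Continuous (fun x => f (x, s))) :
    letI : MeasurableSpace (EuclideanSpace ℝ (Fin d) →L[ℝ] ℝ) := borel _
    Measurable (fun p : EuclideanSpace ℝ (Fin d) × Ξ =>
      fderiv ℝ (fun x => f (x, p.2)) p.1) := by
  letI : MeasurableSpace (EuclideanSpace ℝ (Fin d) →L[ℝ] ℝ) := borel _
  haveI : BorelSpace (EuclideanSpace ℝ (Fin d) →L[ℝ] ℝ) := ⟨rfl⟩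
  apply measurable_of_isClosed
  intro s hs
  have hset : (fun p : EuclideanSpace ℝ (Fin d) × Ξ =>
      fderiv ℝ (fun x => f (x, p.2)) p.1) ⁻¹' s =
      {p : EuclideanSpace ℝ (Fin d) × Ξ |
        DifferentiableAt ℝ (fun x => f (x, p.2)) p.1 ∧
          fderiv ℝ (fun x => f (x, p.2)) p.1 ∈ s} ∪
        ({p : EuclideanSpace ℝ (Fin d) × Ξ |
          DifferentiableAt ℝ (fun x => f (x, p.2)) p.1 ∧
            fderiv ℝ (fun x => f (x, p.2)) p.1 ∈ Set.univ}ᶜ ∩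
          {_p : EuclideanSpace ℝ (Fin d) × Ξ |
            (0 : EuclideanSpace ℝ (Fin d) →L[ℝ] ℝ) ∈ s}) := by
    ext p
    simp only [Set.mem_preimage, Set.mem_union, Set.mem_inter_iff, Set.mem_compl_iff,
      mem_setOf_eq, Set.mem_univ, and_true]
    exact fderiv_mem_iff
  rw [hset]
  exact (measDiffK hf hcont hs.isComplete).union
    ((measDiffK hf hcont complete_univ).compl.inter
      (MeasurableSet.const _))

end Aux

/-- The "lazy gradient" `φ₀(x,s) = ∇f(x,s)` when `f(·,s)` is differentiable
at `x`, and `0` otherwise, is measurable for the product σ-algebra. -/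
theorem stmt1 {d : ℕ} {Ξ : Type*} [MeasurableSpace Ξ]
    (μ : Measure Ξ) [IsProbabilityMeasure μ]
    (f : EuclideanSpace ℝ (Fin d) × Ξ → ℝ)
    (hf : Measurable f)
    (hcont : ∀ s : Ξ, Continuous (fun x => f (x, s))) :
    Measurable (fun p : EuclideanSpace ℝ (Fin d) × Ξ =>
      if DifferentiableAt ℝ (fun x => f (x, p.2)) p.1 then
        gradient (fun x => f (x, p.2)) p.1
      else 0) := by
  letI : MeasurableSpace (EuclideanSpace ℝ (Fin d) →L[ℝ] ℝ) := borel _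
  haveI : BorelSpace (EuclideanSpace ℝ (Fin d) →L[ℝ] ℝ) := ⟨rfl⟩
  have hgrad : (fun p : EuclideanSpace ℝ (Fin d) × Ξ =>
      if DifferentiableAt ℝ (fun x => f (x, p.2)) p.1 then
        gradient (fun x => f (x, p.2)) p.1
      else 0) = fun p : EuclideanSpace ℝ (Fin d) × Ξ =>
        (InnerProductSpace.toDual ℝ (EuclideanSpace ℝ (Fin d))).symm
          (fderiv ℝ (fun x => f (x, p.2)) p.1) := by
    funext p
    split_ifs with h
    · rfl
    · rw [fderiv_zero_of_not_differentiableAt h]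
      simp
  rw [hgrad]
  exact ((InnerProductSpace.toDual ℝ (EuclideanSpace ℝ (Fin d))).symm.continuous.measurable).comp
    (measFDeriv hf hcont)
end

section
/- Any almost-everywhere gradient of f is measurable with respect to the (λ ⊗ μ)-completion of B(ℝ^d) ⊗ T. Here an a.e. gradient is any function φ : ℝ^d × Ξ → ℝ^d with φ = ∇f (λ ⊗ μ)-almost everywhere. -/
open MeasureTheory Filter Set

/- The gradient is the limit, as `t → 0`, of the vector of difference quotients of `f(·, s)`
along an orthonormal basis. Each such vector is a jointly measurable function of `(x, s)`
because `f` is, and an a.e. limit of measurable functions is null-measurable. -/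

section

open Topology

variable {E ι : Type*} [NormedAddCommGroup E] [InnerProductSpace ℝ E] [Fintype ι]

noncomputable def slopeVector (b : OrthonormalBasis ι ℝ E) (g : E → ℝ) (t : ℝ) (x : E) : E :=
  ∑ i, (t⁻¹ • (g (x + t • b i) - g x)) • b i

theorem HasGradientAt.tendsto_slopeVector [CompleteSpace E] (b : OrthonormalBasis ι ℝ E)
    {g : E → ℝ} {g' x : E} (h : HasGradientAt g g' x) :
    Tendsto (fun t => slopeVector b g t x) (𝓝[≠] 0) (𝓝 g') := by
  have hpartial : ∀ i, Tendsto (fun t : ℝ => t⁻¹ • (g (x + t • b i) - g x)) (𝓝[≠] 0)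
      (𝓝 (inner ℝ (b i) g')) := by
    intro i
    simpa [real_inner_comm] using (h.hasFDerivAt.hasLineDerivAt (b i)).tendsto_slope_zero
  rw [← b.sum_repr' g']
  exact tendsto_finsetSum _ fun i _ => (hpartial i).smul_const (b i)

theorem Measurable.slopeVector [MeasurableSpace E] [BorelSpace E] [FiniteDimensional ℝ E]
    {Ξ : Type*} [MeasurableSpace Ξ] (b : OrthonormalBasis ι ℝ E) {f : E × Ξ → ℝ}
    (hf : Measurable f) (t : ℝ) :
    Measurable fun p : E × Ξ => slopeVector b (fun x => f (x, p.2)) t p.1 := by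
  refine Finset.measurable_sum _ fun i _ => Measurable.smul_const ?_ (b i)
  have hshift : Measurable fun p : E × Ξ => f (p.1 + t • b i, p.2) :=
    hf.comp ((measurable_fst.add_const _).prodMk measurable_snd)
  exact (hshift.sub hf).const_smul t⁻¹

theorem nullMeasurable_of_ae_hasGradientAt [MeasurableSpace E] [BorelSpace E]
    [FiniteDimensional ℝ E] {Ξ : Type*} [MeasurableSpace Ξ] {ν : Measure (E × Ξ)}
    {f : E × Ξ → ℝ} (hf : Measurable f) {φ : E × Ξ → E}
    (hφ : ∀ᵐ p ∂ν, HasGradientAt (fun x => f (x, p.2)) (φ p) p.1) :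
    NullMeasurable φ ν := by
  refine (aemeasurable_of_tendsto_metrizable_ae (𝓝[≠] (0 : ℝ))
    (fun t => (hf.slopeVector (stdOrthonormalBasis ℝ E) t).aemeasurable) ?_).nullMeasurable
  filter_upwards [hφ] with p hp
  exact hp.tendsto_slopeVector _

end

theorem stmt3_general {d : ℕ} {Ξ : Type*} [MeasurableSpace Ξ]
    (μ : Measure Ξ)
    (f : EuclideanSpace ℝ (Fin d) × Ξ → ℝ)
    (hf : Measurable f)
    (φ : EuclideanSpace ℝ (Fin d) × Ξ → EuclideanSpace ℝ (Fin d))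
    (hφ : ∀ᵐ p ∂((volume : Measure (EuclideanSpace ℝ (Fin d))).prod μ),
      HasGradientAt (fun x => f (x, p.2)) (φ p) p.1) :
    NullMeasurable φ ((volume : Measure (EuclideanSpace ℝ (Fin d))).prod μ) :=
  nullMeasurable_of_ae_hasGradientAt hf hφ

/-- Any a.e.-gradient `φ` of `f` (i.e. a map such that for `λ ⊗ μ`-a.e.
`(x,s)`, `f(·,s)` has gradient `φ(x,s)` at `x`) is measurable with respect to the
`λ ⊗ μ`-completion of the product σ-algebra (i.e. it is null-measurable). -/
theorem stmt3 {d : ℕ} {Ξ : Type*} [MeasurableSpace Ξ]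
    (μ : Measure Ξ) [IsProbabilityMeasure μ]
    (f : EuclideanSpace ℝ (Fin d) × Ξ → ℝ)
    (hf : Measurable f)
    (hlip : ∀ s : Ξ, LocallyLipschitz (fun x => f (x, s)))
    (φ : EuclideanSpace ℝ (Fin d) × Ξ → EuclideanSpace ℝ (Fin d))
    (hφ : ∀ᵐ p ∂((volume : Measure (EuclideanSpace ℝ (Fin d))).prod μ),
      HasGradientAt (fun x => f (x, p.2)) (φ p) p.1) :
    NullMeasurable φ ((volume : Measure (EuclideanSpace ℝ (Fin d))).prod μ) :=
  stmt3_general μ f hf φ hφ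
end

section
/- Let ν be a Lebesgue-absolutely continuous probability measure on ℝ^d and γ ∈ Γ, where Γ is the set of step sizes for which the lazy-SGD Markov kernel P_γ maps Lebesgue-absolutely continuous measures to Lebesgue-absolutely continuous measures. Then any two SGD sequences (x_n) and (x'_n) with step γ, started at the same x₀ ∼ ν and driven by the same i.i.d. noise, are ℙ^ν-almost surely equal, and for each n the law of x_n under ℙ^ν is Lebesgue-absolutely continuous. -/
open MeasureTheory Filter Set
open scoped Classical

/-- The lazy a.e. gradient `φ₀(x,s)`: gradient of `f(·,s)` at `x` if it exists, else `0`. -/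
noncomputable def lazyGrad {d : ℕ} {Ξ : Type*}
    (f : EuclideanSpace ℝ (Fin d) × Ξ → ℝ)
    (x : EuclideanSpace ℝ (Fin d)) (s : Ξ) : EuclideanSpace ℝ (Fin d) :=
  if DifferentiableAt ℝ (fun y => f (y, s)) x then gradient (fun y => f (y, s)) x else 0

/-- `φ` is an a.e. gradient of `f`: for `λ ⊗ μ`-a.e. `(x,s)`, `f(·,s)` has gradient
`φ(x,s)` at `x`. -/
def IsAEGradient {d : ℕ} {Ξ : Type*} [MeasurableSpace Ξ] (μ : Measure Ξ)
    (f : EuclideanSpace ℝ (Fin d) × Ξ → ℝ)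
    (φ : EuclideanSpace ℝ (Fin d) × Ξ → EuclideanSpace ℝ (Fin d)) : Prop :=
  ∀ᵐ p ∂((volume : Measure (EuclideanSpace ℝ (Fin d))).prod μ),
    HasGradientAt (fun y => f (y, p.2)) (φ p) p.1

/-- `γ ∈ Γ`: the lazy-SGD kernel `P_γ` maps Lebesgue-absolutely continuous probability
measures to Lebesgue-absolutely continuous measures. -/
def StepOK {d : ℕ} {Ξ : Type*} [MeasurableSpace Ξ] (μ : Measure Ξ)
    (f : EuclideanSpace ℝ (Fin d) × Ξ → ℝ) (γ : ℝ) : Prop :=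
  ∀ ρ : Measure (EuclideanSpace ℝ (Fin d)), IsProbabilityMeasure ρ → ρ ≪ volume →
    (ρ.prod μ).map (fun p => p.1 - γ • lazyGrad f p.1 p.2) ≪ volume

/-!
Fix one jointly measurable version `g` of the gradient of `f(·, s)`: the `liminf` of coordinate
difference quotients, which equals the gradient wherever the gradient exists. Every a.e. gradient,
and the lazy gradient `φ₀`, agree with `g` `(λ ⊗ μ)`-a.e. Let `yₙ` be the SGD sequence driven by
`g`. As a measurable function of `x₀, ξ₁, …, ξₙ`, `yₙ` is independent of `ξₙ₊₁`, so `(yₙ, ξₙ₊₁)`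
has law `law(yₙ) ⊗ μ`. By induction, `γ ∈ Γ` gives `law(yₙ) ≪ λ`; hence `law(yₙ, ξₙ₊₁) ≪ λ ⊗ μ`,
so almost surely every SGD step taken from `yₙ` is the `g`-step, and every SGD sequence equals
`(yₙ)` almost surely.
-/

open ProbabilityTheory Topology

noncomputable def diffQuotGrad {ι Ξ : Type*} (f : EuclideanSpace ℝ ι × Ξ → ℝ)
    (p : EuclideanSpace ℝ ι × Ξ) : EuclideanSpace ℝ ι :=
  WithLp.toLp 2 fun i => liminf (fun k : ℕ =>
    ((k : ℝ) + 1) * (f (p.1 + ((k : ℝ) + 1)⁻¹ • EuclideanSpace.single i 1, p.2) - f p))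
    atTop

theorem measurable_diffQuotGrad {ι Ξ : Type*} [Fintype ι] [MeasurableSpace Ξ]
    {f : EuclideanSpace ℝ ι × Ξ → ℝ} (hf : Measurable f) : Measurable (diffQuotGrad f) :=
  (WithLp.measurable_toLp 2 _).comp <| measurable_pi_lambda _ fun _ =>
    .liminf fun _ => measurable_const.mul <|
      (hf.comp ((measurable_fst.add_const _).prodMk measurable_snd)).sub hf

theorem diffQuotGrad_eq_of_hasGradientAt {ι Ξ : Type*} [Fintype ι]
    {f : EuclideanSpace ℝ ι × Ξ → ℝ} {x v : EuclideanSpace ℝ ι} {s : Ξ}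
    (h : HasGradientAt (fun y => f (y, s)) v x) : diffQuotGrad f (x, s) = v := by
  ext i
  set e : EuclideanSpace ℝ ι := EuclideanSpace.single i 1
  have hline : HasDerivAt (fun t : ℝ => x + t • e) e 0 := by
    simpa using ((hasDerivAt_id (0 : ℝ)).smul_const e).const_add x
  have hdir : HasDerivAt (fun t : ℝ => f (x + t • e, s)) (v i) 0 := by
    have hF := h.hasFDerivAt
    rw [← show x + (0 : ℝ) • e = x by simp] at hF
    simpa [e, Function.comp_def, EuclideanSpace.inner_single_right] using
      hF.comp_hasDerivAt (0 : ℝ) hline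
  have hu : Tendsto (fun k : ℕ => ((k : ℝ) + 1)⁻¹) atTop (𝓝[≠] 0) :=
    tendsto_nhdsWithin_of_tendsto_nhds_of_eventually_within _
      (by simpa [one_div] using tendsto_one_div_add_atTop_nhds_zero_nat (𝕜 := ℝ))
      (.of_forall fun k => mem_compl_singleton_iff.2 (by positivity))
  refine ((hdir.tendsto_slope_zero.comp hu).congr fun k => ?_).liminf_eq
  simp [smul_eq_mul, e]

theorem ProbabilityTheory.IndepFun.prodMk_left {Ω α β γ : Type*} [MeasurableSpace Ω]
    [MeasurableSpace α] [MeasurableSpace β] [MeasurableSpace γ]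
    {P : Measure Ω} [IsFiniteMeasure P] {X : Ω → α} {Y : Ω → β} {Z : Ω → γ}
    (hX : Measurable X) (hY : Measurable Y) (hZ : Measurable Z)
    (hXYZ : IndepFun X (fun ω => (Y ω, Z ω)) P) (hYZ : IndepFun Y Z P) :
    IndepFun (fun ω => (X ω, Y ω)) Z P := by
  rw [indepFun_iff_map_prod_eq_prod_map_map (hX.prodMk hY).aemeasurable hZ.aemeasurable,
    (indepFun_iff_map_prod_eq_prod_map_map hX.aemeasurable hY.aemeasurable).1
      (hXYZ.comp measurable_id measurable_fst)]
  calc P.map (fun ω => ((X ω, Y ω), Z ω))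
      = (P.map (fun ω => (X ω, (Y ω, Z ω)))).map MeasurableEquiv.prodAssoc.symm := by
        rw [Measure.map_map MeasurableEquiv.prodAssoc.symm.measurable
          (hX.prodMk (hY.prodMk hZ))]
        rfl
    _ = ((P.map X).prod (P.map Y)).prod (P.map Z) := by
        rw [(indepFun_iff_map_prod_eq_prod_map_map hX.aemeasurable
          (hY.prodMk hZ).aemeasurable).1 hXYZ, (indepFun_iff_map_prod_eq_prod_map_map
          hY.aemeasurable hZ.aemeasurable).1 hYZ, ← Measure.prodAssoc_prod,
          MeasurableEquiv.map_symm_map]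

section RandomIterate

variable {Ω E Ξ : Type*}

def randomIterate (T : E × Ξ → E) (x₀ : Ω → E) (ξ : ℕ → Ω → Ξ) : ℕ → Ω → E
  | 0 => x₀
  | n + 1 => fun ω => T (randomIterate T x₀ ξ n ω, ξ (n + 1) ω)

variable {T : E × Ξ → E} {x₀ : Ω → E} {ξ : ℕ → Ω → Ξ}

theorem eq_randomIterate {x : ℕ → Ω → E} (h₀ : x 0 = x₀)
    (hs : ∀ n ω, x (n + 1) ω = T (x n ω, ξ (n + 1) ω)) : x = randomIterate T x₀ ξ := by
  funext n
  induction n with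
  | zero => exact h₀
  | succ n ih => funext ω; rw [hs, ih]; rfl

variable [MeasurableSpace E] [MeasurableSpace Ξ]

theorem exists_randomIterate_eq_comp (hT : Measurable T) (n : ℕ) :
    ∃ F : E × (Fin n → Ξ) → E, Measurable F ∧
      randomIterate T x₀ ξ n = fun ω => F (x₀ ω, fun i : Fin n => ξ (i + 1) ω) := by
  induction n with
  | zero => exact ⟨Prod.fst, measurable_fst, rfl⟩
  | succ n ih =>
    obtain ⟨F, hF, hF_eq⟩ := ih
    have hinit : Measurable fun q : E × (Fin (n + 1) → Ξ) => F (q.1, Fin.init q.2) :=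
      hF.comp <| measurable_fst.prodMk <|
        measurable_pi_lambda _ fun _ => (measurable_pi_apply _).comp measurable_snd
    refine ⟨fun q => T (F (q.1, Fin.init q.2), q.2 (Fin.last n)),
      hT.comp (hinit.prodMk ((measurable_pi_apply _).comp measurable_snd)), ?_⟩
    funext ω
    simp only [randomIterate, hF_eq]
    rfl

variable [MeasurableSpace Ω]

theorem measurable_randomIterate (hT : Measurable T) (hx₀ : Measurable x₀)
    (hξ : ∀ n, Measurable (ξ n)) (n : ℕ) : Measurable (randomIterate T x₀ ξ n) := by
  induction n with
  | zero => exact hx₀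
  | succ n ih => exact hT.comp (ih.prodMk (hξ _))

variable {P : Measure Ω} {μ : Measure Ξ}

theorem randomIterate_ae_eq [SFinite μ] {T' : E × Ξ → E} {ℓ : Measure E} (hT : Measurable T)
    (hx₀ : Measurable x₀) (hξ : ∀ n, Measurable (ξ n))
    (hlaw : ∀ n, P.map (fun ω => (randomIterate T x₀ ξ n ω, ξ (n + 1) ω))
      = (P.map (randomIterate T x₀ ξ n)).prod μ)
    (hac : ∀ n, P.map (randomIterate T x₀ ξ n) ≪ ℓ)
    (hT' : T' =ᵐ[ℓ.prod μ] T) (n : ℕ) :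
    randomIterate T' x₀ ξ n =ᵐ[P] randomIterate T x₀ ξ n := by
  induction n with
  | zero => rfl
  | succ n ih =>
    have hn := measurable_randomIterate hT hx₀ hξ n
    have hstep : ∀ᵐ ω ∂P, T' (randomIterate T x₀ ξ n ω, ξ (n + 1) ω)
        = T (randomIterate T x₀ ξ n ω, ξ (n + 1) ω) := by
      have hpair : ∀ᵐ q ∂P.map (fun ω => (randomIterate T x₀ ξ n ω, ξ (n + 1) ω)),
          T' q = T q := by
        rw [hlaw n]
        exact ((hac n).prod (.refl μ)).ae_eq hT'
      exact ae_of_ae_map (hn.prodMk (hξ _)).aemeasurable hpair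
    filter_upwards [ih, hstep] with ω hω hTω
    simp only [randomIterate, hω, hTω]

variable [IsProbabilityMeasure P]

theorem indepFun_randomIterate (hT : Measurable T) (hx₀ : Measurable x₀)
    (hξ : ∀ n, Measurable (ξ n)) (hx₀ξ : IndepFun x₀ (fun ω n => ξ n ω) P)
    (hiid : iIndepFun ξ P) (n : ℕ) : IndepFun (randomIterate T x₀ ξ n) (ξ (n + 1)) P := by
  obtain ⟨F, hF, hF_eq⟩ := exists_randomIterate_eq_comp (x₀ := x₀) (ξ := ξ) hT n
  set S : Finset ℕ := (Finset.range n).image (· + 1)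
  have hS : ∀ i : Fin n, (i : ℕ) + 1 ∈ S := fun i => Finset.mem_image_of_mem _ (by simp)
  have hdisj : Disjoint S {n + 1} := by simp [S]
  have hpast : IndepFun (fun ω (i : Fin n) => ξ (i + 1) ω) (ξ (n + 1)) P :=
    (hiid.indepFun_finset S {n + 1} hdisj hξ).comp
      (φ := fun w (i : Fin n) => w ⟨i + 1, hS i⟩)
      (ψ := fun w => w ⟨n + 1, Finset.mem_singleton_self _⟩)
      (measurable_pi_lambda _ fun _ => measurable_pi_apply _) (measurable_pi_apply _)
  have hinit : IndepFun x₀ (fun ω => (fun i : Fin n => ξ (i + 1) ω, ξ (n + 1) ω)) P :=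
    hx₀ξ.comp measurable_id
      ((measurable_pi_lambda _ fun _ => measurable_pi_apply _).prodMk (measurable_pi_apply _))
  rw [hF_eq]
  exact (hinit.prodMk_left hx₀ (measurable_pi_lambda _ fun _ => hξ _) (hξ _) hpast).comp
    hF measurable_id

theorem map_prodMk_randomIterate (hT : Measurable T) (hx₀ : Measurable x₀)
    (hξ : ∀ n, Measurable (ξ n)) (hx₀ξ : IndepFun x₀ (fun ω n => ξ n ω) P)
    (hiid : iIndepFun ξ P) (hξlaw : ∀ n, P.map (ξ n) = μ) (n : ℕ) :
    P.map (fun ω => (randomIterate T x₀ ξ n ω, ξ (n + 1) ω))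
      = (P.map (randomIterate T x₀ ξ n)).prod μ := by
  rw [← hξlaw (n + 1)]
  exact (indepFun_iff_map_prod_eq_prod_map_map
    (measurable_randomIterate hT hx₀ hξ n).aemeasurable (hξ _).aemeasurable).1
    (indepFun_randomIterate hT hx₀ hξ hx₀ξ hiid n)

theorem absolutelyContinuous_map_randomIterate {ℓ : Measure E} (hT : Measurable T)
    (hx₀ : Measurable x₀) (hξ : ∀ n, Measurable (ξ n))
    (hlaw : ∀ n, P.map (fun ω => (randomIterate T x₀ ξ n ω, ξ (n + 1) ω))
      = (P.map (randomIterate T x₀ ξ n)).prod μ)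
    (h₀ : P.map x₀ ≪ ℓ)
    (hstep : ∀ ρ : Measure E, IsProbabilityMeasure ρ → ρ ≪ ℓ
      → (ρ.prod μ).map T ≪ ℓ)
    (n : ℕ) : P.map (randomIterate T x₀ ξ n) ≪ ℓ := by
  induction n with
  | zero => exact h₀
  | succ n ih =>
    have hn := measurable_randomIterate hT hx₀ hξ n
    have : IsProbabilityMeasure (P.map (randomIterate T x₀ ξ n)) :=
      Measure.isProbabilityMeasure_map hn.aemeasurable
    rw [show randomIterate T x₀ ξ (n + 1)
        = T ∘ fun ω => (randomIterate T x₀ ξ n ω, ξ (n + 1) ω) from rfl,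
      ← Measure.map_map hT (hn.prodMk (hξ _)), hlaw n]
    exact hstep _ this ih

end RandomIterate

def sgdStep {E Ξ : Type*} [AddCommGroup E] [Module ℝ E] (γ : ℝ) (φ : E × Ξ → E)
    (p : E × Ξ) : E :=
  p.1 - γ • φ p

theorem sgdStep_ae_eq {E Ξ : Type*} [AddCommGroup E] [Module ℝ E] [MeasurableSpace E]
    [MeasurableSpace Ξ] {m : Measure (E × Ξ)} {γ : ℝ} {φ ψ : E × Ξ → E}
    (h : φ =ᵐ[m] ψ) :
    sgdStep γ φ =ᵐ[m] sgdStep γ ψ :=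
  h.mono fun p hp => by simp only [sgdStep, hp]

section AEGradient

variable {d : ℕ} {Ξ : Type*} [MeasurableSpace Ξ] {μ : Measure Ξ}
  {f : EuclideanSpace ℝ (Fin d) × Ξ → ℝ}
  {φ : EuclideanSpace ℝ (Fin d) × Ξ → EuclideanSpace ℝ (Fin d)}

theorem IsAEGradient.ae_eq_diffQuotGrad (hφ : IsAEGradient μ f φ) :
    φ =ᵐ[volume.prod μ] diffQuotGrad f :=
  hφ.mono fun _ hp => (diffQuotGrad_eq_of_hasGradientAt hp).symm

theorem IsAEGradient.lazyGrad_ae_eq_diffQuotGrad (hφ : IsAEGradient μ f φ) :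
    (fun p => lazyGrad f p.1 p.2) =ᵐ[volume.prod μ] diffQuotGrad f :=
  hφ.mono fun _ hp => by
    show lazyGrad f _ _ = _
    rw [lazyGrad, if_pos hp.differentiableAt, hp.gradient, diffQuotGrad_eq_of_hasGradientAt hp]

theorem StepOK.absolutelyContinuous_map_sgdStep [SFinite μ] {γ : ℝ} (hγ : StepOK μ f γ)
    (hφ : IsAEGradient μ f φ) (ρ : Measure (EuclideanSpace ℝ (Fin d)))
    (hρ : IsProbabilityMeasure ρ) (hρac : ρ ≪ volume) :
    (ρ.prod μ).map (sgdStep γ (diffQuotGrad f)) ≪ volume := by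
  rw [← Measure.map_congr ((hρac.prod (.refl μ)).ae_eq
    (sgdStep_ae_eq (γ := γ) hφ.lazyGrad_ae_eq_diffQuotGrad))]
  exact hγ ρ hρ hρac

end AEGradient

theorem stmt5_general {d : ℕ} {Ξ : Type*} [MeasurableSpace Ξ]
    (μ : Measure Ξ) [IsProbabilityMeasure μ]
    (f : EuclideanSpace ℝ (Fin d) × Ξ → ℝ)
    (hf : Measurable f)
    (γ : ℝ) (hγ : StepOK μ f γ)
    (ν : Measure (EuclideanSpace ℝ (Fin d))) (hν : ν ≪ volume)
    {Ω : Type*} [MeasureSpace Ω] [IsProbabilityMeasure (volume : Measure Ω)]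
    (x0 : Ω → EuclideanSpace ℝ (Fin d)) (ξ : ℕ → Ω → Ξ)
    (hx0m : Measurable x0) (hξm : ∀ n, Measurable (ξ n))
    (hx0law : Measure.map x0 (volume : Measure Ω) = ν) (hξlaw : ∀ n, Measure.map (ξ n) (volume : Measure Ω) = μ)
    (hindep : ProbabilityTheory.IndepFun x0 (fun ω n => ξ n ω) (volume : Measure Ω))
    (hiid : ProbabilityTheory.iIndepFun ξ (volume : Measure Ω))
    (x x' : ℕ → Ω → EuclideanSpace ℝ (Fin d))
    (φ ψ : EuclideanSpace ℝ (Fin d) × Ξ → EuclideanSpace ℝ (Fin d))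
    (hφ : IsAEGradient μ f φ) (hψ : IsAEGradient μ f ψ)
    (hx0eq : x 0 = x0) (hx'0eq : x' 0 = x0)
    (hx : ∀ n ω, x (n + 1) ω = x n ω - γ • φ (x n ω, ξ (n + 1) ω))
    (hx' : ∀ n ω, x' (n + 1) ω = x' n ω - γ • ψ (x' n ω, ξ (n + 1) ω)) :
    (∀ᵐ ω ∂(volume : Measure Ω), ∀ n, x n ω = x' n ω) ∧
      ∀ n, AEMeasurable (x n) (volume : Measure Ω) ∧ Measure.map (x n) (volume : Measure Ω) ≪ (volume : Measure (EuclideanSpace ℝ (Fin d))) := by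
  set T := sgdStep γ (diffQuotGrad f)
  have hT : Measurable T := measurable_fst.sub ((measurable_diffQuotGrad hf).const_smul γ)
  have hlaw := map_prodMk_randomIterate hT hx0m hξm hindep hiid hξlaw
  have hac : ∀ n, (volume : Measure Ω).map (randomIterate T x0 ξ n) ≪ volume :=
    absolutelyContinuous_map_randomIterate hT hx0m hξm hlaw (hx0law ▸ hν)
      (hγ.absolutelyContinuous_map_sgdStep hφ)
  have hx_ae : ∀ n, x n =ᵐ[volume] randomIterate T x0 ξ n := by
    rw [eq_randomIterate (T := sgdStep γ φ) hx0eq hx]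
    exact randomIterate_ae_eq hT hx0m hξm hlaw hac (sgdStep_ae_eq hφ.ae_eq_diffQuotGrad)
  have hx'_ae : ∀ n, x' n =ᵐ[volume] randomIterate T x0 ξ n := by
    rw [eq_randomIterate (T := sgdStep γ ψ) hx'0eq hx']
    exact randomIterate_ae_eq hT hx0m hξm hlaw hac (sgdStep_ae_eq hψ.ae_eq_diffQuotGrad)
  refine ⟨ae_all_iff.2 fun n => (hx_ae n).trans (hx'_ae n).symm, fun n => ⟨?_, ?_⟩⟩
  · exact (measurable_randomIterate hT hx0m hξm n).aemeasurable.congr (hx_ae n).symm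
  · exact Measure.map_congr (hx_ae n) ▸ hac n

/-- for `γ ∈ Γ` and an absolutely continuous initialization `x₀ ∼ ν`, any
two SGD sequences with step `γ` (built from possibly different a.e. gradients, but the
same initialization and the same i.i.d. noise) are a.s. equal, each iterate is
measurable for the completed σ-algebra (i.e. a.e.-measurable) and its law is
Lebesgue-absolutely continuous. -/
theorem stmt5 {d : ℕ} {Ξ : Type*} [MeasurableSpace Ξ]
    (μ : Measure Ξ) [IsProbabilityMeasure μ]
    (f : EuclideanSpace ℝ (Fin d) × Ξ → ℝ)
    (hf : Measurable f)
    (hlip : ∀ s : Ξ, LocallyLipschitz (fun y => f (y, s)))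
    (γ : ℝ) (hγpos : 0 < γ) (hγ : StepOK μ f γ)
    (ν : Measure (EuclideanSpace ℝ (Fin d))) [IsProbabilityMeasure ν] (hν : ν ≪ volume)
    {Ω : Type*} [MeasureSpace Ω] [IsProbabilityMeasure (volume : Measure Ω)]
    (x0 : Ω → EuclideanSpace ℝ (Fin d)) (ξ : ℕ → Ω → Ξ)
    (hx0m : Measurable x0) (hξm : ∀ n, Measurable (ξ n))
    (hx0law : Measure.map x0 (volume : Measure Ω) = ν) (hξlaw : ∀ n, Measure.map (ξ n) (volume : Measure Ω) = μ)
    (hindep : ProbabilityTheory.IndepFun x0 (fun ω n => ξ n ω) (volume : Measure Ω))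
    (hiid : ProbabilityTheory.iIndepFun ξ (volume : Measure Ω))
    (x x' : ℕ → Ω → EuclideanSpace ℝ (Fin d))
    (φ ψ : EuclideanSpace ℝ (Fin d) × Ξ → EuclideanSpace ℝ (Fin d))
    (hφ : IsAEGradient μ f φ) (hψ : IsAEGradient μ f ψ)
    (hx0eq : x 0 = x0) (hx'0eq : x' 0 = x0)
    (hx : ∀ n ω, x (n + 1) ω = x n ω - γ • φ (x n ω, ξ (n + 1) ω))
    (hx' : ∀ n ω, x' (n + 1) ω = x' n ω - γ • ψ (x' n ω, ξ (n + 1) ω)) :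
    (∀ᵐ ω ∂(volume : Measure Ω), ∀ n, x n ω = x' n ω) ∧
      ∀ n, AEMeasurable (x n) (volume : Measure Ω) ∧ Measure.map (x n) (volume : Measure Ω) ≪ (volume : Measure (EuclideanSpace ℝ (Fin d))) :=
  stmt5_general μ f hf γ hγ ν hν x0 ξ hx0m hξm hx0law hξlaw hindep hiid x x' φ ψ hφ hψ hx0eq hx'0eq
    hx hx'
end

section
/- Let P_γ be a Markov kernel on ℝ^d, and suppose there exist measurable V : ℝ^d → [0,∞), p : ℝ^d → [0,∞) with p(x) → ∞ as ‖x‖ → ∞, constants α(γ) > 0, C ≥ 0, R > 0, such that for all γ ∈ (0,γ₀]: P_γ V ≤ V − α(γ)p + Cα(γ)·1_{‖x‖ ≤ R}, and each P_γ has an invariant probability measure π_γ. Then π_γ(p) ≤ C for every γ ∈ (0,γ₀], and consequently the family {π_γ : γ ∈ (0,γ₀]} is tight. -/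
/-!
Truncate the Lyapunov function. Writing `W = V - f + b` for the right-hand side of a drift
inequality `κ V ≤ W`, a Markov kernel satisfies `κ (V ∧ N) ≤ W ∧ N`, and integrating against an
invariant probability measure `μ` (against which the bounded `V ∧ N` is integrable) gives
`∫ (V ∧ N - W ∧ N + b) dμ ≤ b`. The integrand is nonnegative and equals `f` as soon as
`N ≥ max V W`, so Fatou's lemma yields `μ f ≤ b`. For `P_γ` one takes `V / α(γ)`, `f = p`
and `b = C`. The uniform bound on `π_γ(p)` then gives tightness by Markov's inequality, since the
sublevel sets of the coercive `p` are relatively compact.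
-/

open MeasureTheory Filter Set Metric ProbabilityTheory Topology

namespace MeasureTheory

section Truncation

variable {E : Type*} [MeasurableSpace E]

theorem Measure.integral_bind {β F : Type*} [MeasurableSpace β] [NormedAddCommGroup F]
    [NormedSpace ℝ F] {κ : Kernel E β} {μ : Measure E} {h : β → F}
    (hh : Integrable h (μ.bind κ)) : ∫ y, h y ∂(μ.bind κ) = ∫ x, ∫ y, h y ∂κ x ∂μ := by
  rw [Measure.comp_eq_comp_const_apply] at hh ⊢
  rw [Kernel.integral_comp hh, Kernel.const_apply]

theorem integrable_min_const {ν : Measure E} [IsFiniteMeasure ν] {g : E → ℝ} (hg : Measurable g)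
    (hg0 : ∀ x, 0 ≤ g x) (c : ℝ) : Integrable (fun x => min (g x) c) ν :=
  Integrable.of_bound (hg.min measurable_const).aestronglyMeasurable |c| <| ae_of_all _ fun x => by
    rw [Real.norm_eq_abs, abs_le]
    exact ⟨le_min ((neg_nonpos.2 (abs_nonneg c)).trans (hg0 x)) (neg_abs_le c),
      (min_le_right _ _).trans (le_abs_self c)⟩

theorem integral_min_le_min_integral {ν : Measure E} [IsProbabilityMeasure ν] {g : E → ℝ}
    (hg : Integrable g ν) (c : ℝ) : ∫ x, min (g x) c ∂ν ≤ min (∫ x, g x ∂ν) c := by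
  have hmin : Integrable (fun x => min (g x) c) ν := hg.inf (integrable_const c)
  refine le_min (integral_mono hmin hg fun x => min_le_left _ _) ?_
  calc ∫ x, min (g x) c ∂ν ≤ ∫ _, c ∂ν :=
        integral_mono hmin (integrable_const c) fun x => min_le_right _ _
    _ = c := by simp

end Truncation

section Tightness

variable {X : Type*} [MeasurableSpace X] [TopologicalSpace X]

theorem isTightMeasureSet_of_lintegral_le {p : X → ℝ} (hpm : Measurable p)
    (hp : Tendsto p (cocompact X) atTop) {S : Set (Measure X)} {c : ENNReal} (hc : c ≠ ⊤)
    (hS : ∀ μ ∈ S, ∫⁻ x, ENNReal.ofReal (p x) ∂μ ≤ c) : IsTightMeasureSet S := by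
  rw [isTightMeasureSet_iff_exists_isCompact_measure_compl_le]
  intro ε hε
  obtain ⟨n, hn⟩ := ENNReal.exists_nat_mul_gt hε.ne' hc
  obtain ⟨K, hK, hKp⟩ := hasBasis_cocompact.eventually_iff.1 (hp.eventually_ge_atTop (n : ℝ))
  refine ⟨K, hK, fun μ hμ => le_of_not_gt fun hlt => hn.not_ge ?_⟩
  calc (n : ENNReal) * ε ≤ n * μ Kᶜ := by gcongr
    _ ≤ n * μ {x | (n : ENNReal) ≤ ENNReal.ofReal (p x)} := by
        gcongr
        intro x hx
        simpa using ENNReal.ofReal_le_ofReal (hKp hx)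
    _ ≤ ∫⁻ x, ENNReal.ofReal (p x) ∂μ :=
        mul_meas_ge_le_lintegral₀ (ENNReal.measurable_ofReal.comp hpm).aemeasurable _
    _ ≤ c := hS μ hμ

theorem IsTightMeasureSet.exists_isCompact_one_sub_le_measureReal [OpensMeasurableSpace X]
    [T2Space X] {S : Set (Measure X)} (hS : IsTightMeasureSet S)
    (hprob : ∀ μ ∈ S, IsProbabilityMeasure μ) {ε : ℝ} (hε : 0 < ε) :
    ∃ K, IsCompact K ∧ ∀ μ ∈ S, 1 - ε ≤ μ.real K := by
  obtain ⟨K, hK, hKε⟩ :=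
    isTightMeasureSet_iff_exists_isCompact_measure_compl_le.1 hS _ (ENNReal.ofReal_pos.2 hε)
  refine ⟨K, hK, fun μ hμ => ?_⟩
  have := hprob μ hμ
  have hle := ENNReal.toReal_le_of_le_ofReal hε.le (hKε μ hμ)
  rw [← measureReal_def, measureReal_compl hK.isClosed.measurableSet, probReal_univ] at hle
  linarith

end Tightness

end MeasureTheory

namespace ProbabilityTheory

variable {E : Type*} [MeasurableSpace E] {κ : Kernel E E} [IsMarkovKernel κ] {μ : Measure E}
  [IsProbabilityMeasure μ]

theorem integral_min_le_integral_min_of_bind_eq (hμ : μ.bind κ = μ) {V W : E → ℝ}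
    (hVm : Measurable V) (hWm : Measurable W) (hV0 : ∀ x, 0 ≤ V x) (hW0 : ∀ x, 0 ≤ W x)
    (hVint : ∀ x, Integrable V (κ x)) (hVW : ∀ x, ∫ y, V y ∂κ x ≤ W x) {N : ℝ} (hN : 0 ≤ N) :
    ∫ x, min (V x) N ∂μ ≤ ∫ x, min (W x) N ∂μ := by
  have hVN : Integrable (fun x => min (V x) N) (μ.bind κ) := by
    rw [hμ]; exact integrable_min_const hVm hV0 N
  conv_lhs => rw [← hμ, Measure.integral_bind hVN]
  refine integral_mono_of_nonneg
    (ae_of_all _ fun x => integral_nonneg fun y => le_min (hV0 y) hN)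
    (integrable_min_const hWm hW0 N) (ae_of_all _ fun x => ?_)
  exact (integral_min_le_min_integral (hVint x) N).trans (min_le_min_right N (hVW x))

theorem lintegral_ofReal_le_of_drift (hμ : μ.bind κ = μ) {V f : E → ℝ} {b : ℝ}
    (hVm : Measurable V) (hfm : Measurable f) (hV0 : ∀ x, 0 ≤ V x) (hf0 : ∀ x, 0 ≤ f x)
    (hb : 0 ≤ b) (hVint : ∀ x, Integrable V (κ x))
    (hdrift : ∀ x, ∫ y, V y ∂κ x ≤ V x - f x + b) :
    ∫⁻ x, ENNReal.ofReal (f x) ∂μ ≤ ENNReal.ofReal b := by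
  set W : E → ℝ := fun x => V x - f x + b
  have hWx : ∀ x, W x = V x - f x + b := fun _ => rfl
  have hWm : Measurable W := (hVm.sub hfm).add_const b
  have hW0 : ∀ x, 0 ≤ W x := fun x => (integral_nonneg fun y => hV0 y).trans (hdrift x)
  set u : ℝ → E → ℝ := fun N x => min (V x) N - min (W x) N + b with hu
  have hu0 : ∀ N x, 0 ≤ u N x := fun N x => by
    have : min (W x) N ≤ min (V x) N + b :=
      calc min (W x) N ≤ min (V x + b) (N + b) :=
            min_le_min (by linarith [hWx x, hf0 x]) (by linarith)
        _ = min (V x) N + b := min_add_add_right _ _ _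
    simp only [hu]; linarith
  have hu_int : ∀ N, Integrable (u N) μ := fun N =>
    ((integrable_min_const hVm hV0 N).sub (integrable_min_const hWm hW0 N)).add
      (integrable_const b)
  have hu_le : ∀ N, 0 ≤ N → ∫ x, u N x ∂μ ≤ b := fun N hN => by
    have hVN := integrable_min_const (ν := μ) hVm hV0 N
    have hWN := integrable_min_const (ν := μ) hWm hW0 N
    rw [integral_add (f := fun x => min (V x) N - min (W x) N) (hVN.sub hWN) (integrable_const b),
      integral_sub hVN hWN]
    simp only [integral_const, probReal_univ, one_smul]
    linarith [integral_min_le_integral_min_of_bind_eq hμ hVm hWm hV0 hW0 hVint hdrift hN]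
  have hu_lim : ∀ x, ∀ᶠ N in atTop, u N x = f x := fun x => by
    filter_upwards [eventually_ge_atTop (max (V x) (W x))] with N hN
    simp only [hu]
    rw [min_eq_left (le_of_max_le_left hN), min_eq_left (le_of_max_le_right hN), hWx]
    ring
  calc ∫⁻ x, ENNReal.ofReal (f x) ∂μ
      = ∫⁻ x, liminf (fun N => ENNReal.ofReal (u N x)) atTop ∂μ := by
        refine lintegral_congr fun x => (Tendsto.liminf_eq ?_).symm
        exact tendsto_const_nhds.congr' <| (hu_lim x).mono fun N h => congrArg _ h.symm
    _ ≤ liminf (fun N => ∫⁻ x, ENNReal.ofReal (u N x) ∂μ) atTop :=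
        lintegral_liminf_le' fun N => (hu_int N).aemeasurable.ennreal_ofReal
    _ ≤ ENNReal.ofReal b := by
        refine liminf_le_of_frequently_le' ((eventually_ge_atTop 0).frequently.mono fun N hN => ?_)
        rw [← ofReal_integral_eq_lintegral_ofReal (hu_int N) (ae_of_all _ (hu0 N))]
        exact ENNReal.ofReal_le_ofReal (hu_le N hN)

theorem lintegral_ofReal_le_of_drift_indicator (hμ : μ.bind κ = μ) {V f : E → ℝ} {a C : ℝ}
    {B : Set E} (hVm : Measurable V) (hfm : Measurable f) (hV0 : ∀ x, 0 ≤ V x)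
    (hf0 : ∀ x, 0 ≤ f x) (ha : 0 < a) (hC : 0 ≤ C) (hVint : ∀ x, Integrable V (κ x))
    (hdrift : ∀ x, ∫ y, V y ∂κ x ≤ V x - a * f x + C * a * B.indicator 1 x) :
    ∫⁻ x, ENNReal.ofReal (f x) ∂μ ≤ ENNReal.ofReal C := by
  refine lintegral_ofReal_le_of_drift hμ (hVm.div_const a) hfm (fun x => div_nonneg (hV0 x) ha.le)
    hf0 hC (fun x => (hVint x).div_const a) fun x => ?_
  rw [integral_div, div_le_iff₀ ha]
  calc ∫ y, V y ∂κ x ≤ V x - a * f x + C * a * B.indicator 1 x := hdrift x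
    _ ≤ V x - a * f x + C * a * 1 := by
        gcongr
        exact Set.indicator_le_self' (fun _ _ => zero_le_one) x
    _ = (V x / a - f x + C) * a := by field_simp

end ProbabilityTheory

theorem stmt12_general {d : ℕ} (γ₀ : ℝ)
    (P : ℝ → Kernel (EuclideanSpace ℝ (Fin d)) (EuclideanSpace ℝ (Fin d)))
    (hMarkov : ∀ γ ∈ Ioc 0 γ₀, IsMarkovKernel (P γ))
    (V p : EuclideanSpace ℝ (Fin d) → ℝ)
    (hVm : Measurable V) (hpm : Measurable p)
    (hV0 : ∀ x, 0 ≤ V x) (hp0 : ∀ x, 0 ≤ p x)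
    (hcoerc : Tendsto p (cocompact (EuclideanSpace ℝ (Fin d))) atTop)
    (α : ℝ → ℝ) (hα : ∀ γ ∈ Ioc 0 γ₀, 0 < α γ)
    (C R : ℝ) (hC : 0 ≤ C)
    (hVint : ∀ γ ∈ Ioc 0 γ₀, ∀ x, Integrable V (P γ x))
    (hdrift : ∀ γ ∈ Ioc 0 γ₀, ∀ x,
      ∫ y, V y ∂(P γ x) ≤ V x - α γ * p x + C * α γ * (closedBall 0 R).indicator 1 x)
    (π : ℝ → Measure (EuclideanSpace ℝ (Fin d)))
    (hπ : ∀ γ ∈ Ioc 0 γ₀, IsProbabilityMeasure (π γ) ∧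
      (π γ).bind (fun x => (P γ) x) = π γ) :
    (∀ γ ∈ Ioc 0 γ₀, ∫ x, p x ∂(π γ) ≤ C) ∧
    ∀ ε > (0 : ℝ), ∃ K : Set (EuclideanSpace ℝ (Fin d)), IsCompact K ∧
      ∀ γ ∈ Ioc 0 γ₀, 1 - ε ≤ ((π γ) K).toReal := by
  have hbound : ∀ γ ∈ Ioc 0 γ₀, ∫⁻ x, ENNReal.ofReal (p x) ∂(π γ) ≤ ENNReal.ofReal C := by
    intro γ hγ
    have := hMarkov γ hγ
    have := (hπ γ hγ).1
    exact lintegral_ofReal_le_of_drift_indicator (hπ γ hγ).2 hVm hpm hV0 hp0 (hα γ hγ) hC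
      (hVint γ hγ) (hdrift γ hγ)
  refine ⟨fun γ hγ => ?_, fun ε hε => ?_⟩
  · have := (hπ γ hγ).1
    rw [integral_eq_lintegral_of_nonneg_ae (ae_of_all _ hp0) hpm.aestronglyMeasurable]
    exact ENNReal.toReal_le_of_le_ofReal hC (hbound γ hγ)
  · have htight : IsTightMeasureSet (π '' Ioc 0 γ₀) :=
      isTightMeasureSet_of_lintegral_le hpm hcoerc ENNReal.ofReal_ne_top
        (forall_mem_image.2 hbound)
    obtain ⟨K, hK, hKε⟩ := htight.exists_isCompact_one_sub_le_measureReal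
      (forall_mem_image.2 fun γ hγ => (hπ γ hγ).1) hε
    exact ⟨K, hK, fun γ hγ => hKε _ (mem_image_of_mem π hγ)⟩

/-- drift condition `P_γ V ≤ V − α(γ)p + Cα(γ)1_{‖x‖≤R}` with coercive
`p` implies `π_γ(p) ≤ C` for each invariant probability measure `π_γ`, and tightness of
the family `{π_γ : γ ∈ (0,γ₀]}`. -/
theorem stmt12 {d : ℕ} (γ₀ : ℝ) (hγ₀ : 0 < γ₀)
    (P : ℝ → Kernel (EuclideanSpace ℝ (Fin d)) (EuclideanSpace ℝ (Fin d)))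
    (hMarkov : ∀ γ ∈ Ioc 0 γ₀, IsMarkovKernel (P γ))
    (V p : EuclideanSpace ℝ (Fin d) → ℝ)
    (hVm : Measurable V) (hpm : Measurable p)
    (hV0 : ∀ x, 0 ≤ V x) (hp0 : ∀ x, 0 ≤ p x)
    (hcoerc : Tendsto p (cocompact (EuclideanSpace ℝ (Fin d))) atTop)
    (α : ℝ → ℝ) (hα : ∀ γ ∈ Ioc 0 γ₀, 0 < α γ)
    (C R : ℝ) (hC : 0 ≤ C) (hR : 0 < R)
    (hVint : ∀ γ ∈ Ioc 0 γ₀, ∀ x, Integrable V (P γ x))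
    (hdrift : ∀ γ ∈ Ioc 0 γ₀, ∀ x,
      ∫ y, V y ∂(P γ x) ≤ V x - α γ * p x + C * α γ * (closedBall 0 R).indicator 1 x)
    (π : ℝ → Measure (EuclideanSpace ℝ (Fin d)))
    (hπ : ∀ γ ∈ Ioc 0 γ₀, IsProbabilityMeasure (π γ) ∧
      (π γ).bind (fun x => (P γ) x) = π γ) :
    (∀ γ ∈ Ioc 0 γ₀, ∫ x, p x ∂(π γ) ≤ C) ∧
    ∀ ε > (0 : ℝ), ∃ K : Set (EuclideanSpace ℝ (Fin d)), IsCompact K ∧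
      ∀ γ ∈ Ioc 0 γ₀, 1 - ε ≤ ((π γ) K).toReal :=
  stmt12_general γ₀ P hMarkov V p hVm hpm hV0 hp0 hcoerc α hα C R hC hVint hdrift π hπ
end
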